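/- Let G1, ..., Gn be independent standard Gumbel random variables and a1, ..., an real numbers. Then P(a1 + G1 ≥ max(a2 + G2, ..., an + Gn)) = exp(a1) / (exp(a1) + ... + exp(an)). -/

import Mathlib

open MeasureTheory ProbabilityTheory

/-- The standard Gumbel distribution on `ℝ`, with density `exp (-(x + exp (-x)))`
(and CDF `x ↦ exp (-exp (-x))`). -/
noncomputable def gumbel : Measure ℝ :=
  volume.withDensity fun x => ENNReal.ofReal (Real.exp (-(x + Real.exp (-x))))

/-! The substitution `u = exp (-x)` shows that `exp (-G)` is standard exponential when `G` is
Gumbel. Hence `P(G ≤ t) = exp (-exp (-t))` and `E[exp (-c exp (-G))] = 1 / (1 + c)`.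
Conditionally on `G 0 = t`, the event has probability
`∏_{i ≠ 0} P(G i ≤ a 0 - a i + t) = exp (-S exp (-t))` with `S = ∑_{i ≠ 0} exp (a i - a 0)`,
so the answer is `1 / (1 + S) = exp (a 0) / ∑ i, exp (a i)`. -/

open Real Set

open scoped ENNReal

theorem image_exp_neg_univ : (fun x : ℝ => exp (-x)) '' univ = Ioi 0 := by
  rw [image_univ, ← Function.comp_def, neg_surjective.range_comp, range_exp]

theorem image_exp_neg_Iic (t : ℝ) : (fun x : ℝ => exp (-x)) '' Iic t = Ici (exp (-t)) := by
  ext u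
  constructor
  · rintro ⟨x, hx, rfl⟩
    exact exp_le_exp.2 (neg_le_neg hx)
  · intro hu
    have hu_pos : 0 < u := (exp_pos _).trans_le hu
    refine ⟨-log u, ?_, by simp [exp_log hu_pos]⟩
    rw [mem_Iic, neg_le]
    exact (le_log_iff_exp_le hu_pos).2 hu

theorem lintegral_image_exp_neg {s : Set ℝ} (hs : MeasurableSet s) (g : ℝ → ℝ≥0∞) :
    ∫⁻ u in (fun x => exp (-x)) '' s, g u
      = ∫⁻ x in s, ENNReal.ofReal (exp (-x)) * g (exp (-x)) := by
  have hderiv : ∀ x ∈ s, HasDerivWithinAt (fun x => exp (-x)) (-exp (-x)) s x := fun x _ => by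
    simpa using ((hasDerivAt_neg x).exp).hasDerivWithinAt
  have hinj : InjOn (fun x : ℝ => exp (-x)) s := fun x _ y _ h => by simpa using h
  simpa using lintegral_image_eq_lintegral_abs_deriv_mul hs hderiv hinj g

theorem lintegral_Ioi_exp_neg_mul {c : ℝ} (hc : 0 < c) (b : ℝ) :
    ∫⁻ u in Ioi b, ENNReal.ofReal (exp (-(c * u))) = ENNReal.ofReal (exp (-(c * b)) / c) := by
  have hneg : -c < 0 := neg_lt_zero.2 hc
  simp_rw [← neg_mul]
  rw [← ofReal_integral_eq_lintegral_ofReal (integrableOn_exp_mul_Ioi hneg b)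
    (ae_of_all _ fun u => (exp_pos _).le), integral_exp_mul_Ioi hneg, neg_div_neg_eq]

instance : SigmaFinite gumbel := by
  unfold gumbel
  infer_instance

theorem setLIntegral_gumbel_comp_exp_neg {s : Set ℝ} (hs : MeasurableSet s) (g : ℝ → ℝ≥0∞) :
    ∫⁻ x in s, g (exp (-x)) ∂gumbel
      = ∫⁻ u in (fun x => exp (-x)) '' s, ENNReal.ofReal (exp (-u)) * g u := by
  rw [lintegral_image_exp_neg hs, gumbel, restrict_withDensity hs,
    lintegral_withDensity_eq_lintegral_mul_non_measurable _ (by fun_prop)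
      (ae_of_all _ fun _ => ENNReal.ofReal_lt_top)]
  congr 1 with x
  rw [Pi.mul_apply, ← mul_assoc, ← ENNReal.ofReal_mul (exp_pos _).le, ← exp_add]
  ring_nf

theorem gumbel_Iic (t : ℝ) : gumbel (Iic t) = ENNReal.ofReal (exp (-exp (-t))) := by
  calc gumbel (Iic t) = ∫⁻ u in Ici (exp (-t)), ENNReal.ofReal (exp (-(1 * u))) := by
        simpa [image_exp_neg_Iic] using
          setLIntegral_gumbel_comp_exp_neg measurableSet_Iic fun _ => 1
    _ = ENNReal.ofReal (exp (-exp (-t))) := by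
      rw [setLIntegral_congr Ioi_ae_eq_Ici.symm, lintegral_Ioi_exp_neg_mul one_pos]
      simp

theorem lintegral_gumbel_exp_neg_mul_exp_neg {c : ℝ} (hc : 0 ≤ c) :
    ∫⁻ x, ENNReal.ofReal (exp (-(c * exp (-x)))) ∂gumbel = ENNReal.ofReal (1 / (1 + c)) := by
  calc ∫⁻ x, ENNReal.ofReal (exp (-(c * exp (-x)))) ∂gumbel
      = ∫⁻ u in Ioi 0, ENNReal.ofReal (exp (-u)) * ENNReal.ofReal (exp (-(c * u))) := by
        rw [← setLIntegral_univ, setLIntegral_gumbel_comp_exp_neg MeasurableSet.univ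
          (fun u => ENNReal.ofReal (exp (-(c * u)))), image_exp_neg_univ]
    _ = ∫⁻ u in Ioi 0, ENNReal.ofReal (exp (-((1 + c) * u))) := by
      congr 1 with u
      rw [← ENNReal.ofReal_mul (exp_pos _).le, ← exp_add]
      ring_nf
    _ = ENNReal.ofReal (1 / (1 + c)) := by
      rw [lintegral_Ioi_exp_neg_mul (by linarith)]
      simp

theorem measurableSet_setOf_forall_add_le_add {ι : Type*} [Countable ι] (a : ι → ℝ) (k : ι) :
    MeasurableSet {x : ι → ℝ | ∀ i, a i + x i ≤ a k + x k} := by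
  simp only [ofPred_forall]
  exact .iInter fun i => measurableSet_le (by fun_prop) (by fun_prop)

theorem pi_setOf_forall_add_le_add {n : ℕ} (μ : Fin (n + 1) → Measure ℝ) [∀ i, SigmaFinite (μ i)]
    (a : Fin (n + 1) → ℝ) (k : Fin (n + 1)) :
    Measure.pi μ {x | ∀ i, a i + x i ≤ a k + x k}
      = ∫⁻ t, ∏ j, μ (k.succAbove j) (Iic (a k + t - a (k.succAbove j))) ∂μ k := by
  set e := MeasurableEquiv.piFinSuccAbove (fun _ => ℝ) k
  set B : Set (ℝ × (Fin n → ℝ)) := {p | ∀ j, a (k.succAbove j) + p.2 j ≤ a k + p.1}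
  have hB : e.symm ⁻¹' {x | ∀ i, a i + x i ≤ a k + x k} = B := by
    ext ⟨t, y⟩
    simp [e, B, Fin.forall_iff_succAbove k, Fin.insertNth_apply_succAbove]
  have hBm : MeasurableSet B := hB ▸ e.symm.measurable (measurableSet_setOf_forall_add_le_add a k)
  rw [← ((measurePreserving_piFinSuccAbove μ k).symm e).measure_preimage_equiv, hB,
    Measure.prod_apply hBm]
  congr 1 with t
  have hslice : Prod.mk t ⁻¹' B = univ.pi fun j => Iic (a k + t - a (k.succAbove j)) := by
    ext y
    simp only [B, mem_preimage, mem_ofPred_eq, mem_univ_pi, mem_Iic, le_sub_iff_add_le']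
  rw [hslice, Measure.pi_pi]

theorem prod_gumbel_Iic {ι : Type*} (s : Finset ι) (b t : ℝ) (c : ι → ℝ) :
    ∏ j ∈ s, gumbel (Iic (b + t - c j))
      = ENNReal.ofReal (exp (-((∑ j ∈ s, exp (c j - b)) * exp (-t)))) := by
  simp_rw [gumbel_Iic]
  rw [← ENNReal.ofReal_prod_of_nonneg fun _ _ => (exp_pos _).le, ← exp_sum, Finset.sum_mul,
    ← Finset.sum_neg_distrib]
  congr 3 with j
  rw [← exp_add]
  ring_nf

theorem gumbel_max_n_general {Ω : Type*} [MeasureSpace Ω]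
    (n : ℕ) (G : Fin (n + 1) → Ω → ℝ)
    (hG : ∀ i, Measurable (G i))
    (hindep : iIndepFun G volume)
    (hlaw : ∀ i, Measure.map (G i) volume = gumbel) (a : Fin (n + 1) → ℝ) :
    ((volume : Measure Ω) {ω | ∀ i, a i + G i ω ≤ a 0 + G 0 ω}).toReal
      = Real.exp (a 0) / ∑ i, Real.exp (a i) := by
  set S := ∑ j : Fin n, exp (a j.succ - a 0)
  have hS : 0 ≤ S := Finset.sum_nonneg fun _ _ => (exp_pos _).le
  have hjoint : Measure.map (fun ω i => G i ω) volume = Measure.pi fun _ => gumbel := by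
    simpa only [hlaw] using hindep.map_fun_eq_pi_map fun i => (hG i).aemeasurable
  have hevent : (volume : Measure Ω) {ω | ∀ i, a i + G i ω ≤ a 0 + G 0 ω}
      = ∫⁻ t, ENNReal.ofReal (exp (-(S * exp (-t)))) ∂gumbel := by
    change volume ((fun ω i => G i ω) ⁻¹' {x | ∀ i, a i + x i ≤ a 0 + x 0}) = _
    rw [← Measure.map_apply (measurable_pi_lambda _ hG)
      (measurableSet_setOf_forall_add_le_add a 0), hjoint, pi_setOf_forall_add_le_add]
    simp only [Fin.succAbove_zero, prod_gumbel_Iic, S]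
  have hsum : ∑ i, exp (a i) = exp (a 0) * (1 + S) := by
    rw [Fin.sum_univ_succ, mul_add, mul_one, Finset.mul_sum]
    simp only [← exp_add, add_sub_cancel]
  rw [hevent, lintegral_gumbel_exp_neg_mul_exp_neg hS, ENNReal.toReal_ofReal (by positivity), hsum]
  field_simp

theorem gumbel_max_n {Ω : Type*} [MeasureSpace Ω]
    [IsProbabilityMeasure (volume : Measure Ω)] (n : ℕ) (G : Fin (n + 1) → Ω → ℝ)
    (hG : ∀ i, Measurable (G i))
    (hindep : iIndepFun G volume)
    (hlaw : ∀ i, Measure.map (G i) volume = gumbel) (a : Fin (n + 1) → ℝ) :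
    ((volume : Measure Ω) {ω | ∀ i, a i + G i ω ≤ a 0 + G 0 ω}).toReal
      = Real.exp (a 0) / ∑ i, Real.exp (a i) :=
  gumbel_max_n_general n G hG hindep hlaw a
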